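/- Let N ~ N(0,1) with density φ and let X be any real random variable. If E[f'(X) − X·f(X)] = 0 for every absolutely continuous f : ℝ → ℝ with E|f'(N)| < ∞, then X has the standard Gaussian distribution. -/

import Mathlib

/-!
For a bounded continuous test function `h`, put `g = h - E[h(N)]` and solve Stein's equation
`f' - x f = g` by `f(x) = φ(x)⁻¹ ∫_{-∞}^x g φ`. Because `E[g(N)] = 0`, this integral is also
`-∫_x^∞ g φ`, and the Mills-ratio bounds `x ∫_x^∞ φ ≤ φ(x)` and `-x ∫_{-∞}^x φ ≤ φ(x)`, applied
to the tail on the side of `x` away from `0`, give `|x f(x)| ≤ ‖g‖`. Hence `f'` is bounded,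
`f` is an admissible test function, and the hypothesis yields `E[g(X)] = E[f'(X) - X f(X)] = 0`.
Bounded continuous functions determine a finite measure on `ℝ`, so the law of `X` is `N(0,1)`.
-/

open MeasureTheory ProbabilityTheory
open Set Filter Topology BoundedContinuousFunction
open scoped NNReal

lemma hasDerivAt_integral_Iic {E : Type*} [NormedAddCommGroup E] [NormedSpace ℝ E]
    [CompleteSpace E] {k : ℝ → E} (hk : Integrable k) {x : ℝ} (hkx : ContinuousAt k x) :
    HasDerivAt (fun t => ∫ y in Iic t, k y) (k x) x := by
  have hsplit : (fun t => ∫ y in Iic t, k y) = fun t => (∫ y in Iic 0, k y) + ∫ y in 0..t, k y := by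
    funext t
    rw [← intervalIntegral.integral_Iic_sub_Iic hk.integrableOn hk.integrableOn, add_sub_cancel]
  rw [hsplit]
  exact (intervalIntegral.integral_hasDerivAt_right hk.intervalIntegrable
    hk.aestronglyMeasurable.stronglyMeasurableAtFilter hkx).const_add _

lemma hasDerivAt_gaussianPDFReal (μ : ℝ) (v : ℝ≥0) (x : ℝ) :
    HasDerivAt (gaussianPDFReal μ v) (-(x - μ) / v * gaussianPDFReal μ v x) x := by
  have hexponent : HasDerivAt (fun y => -(y - μ) ^ 2 / (2 * v)) (-(x - μ) / v) x :=
    ((((hasDerivAt_id' x).sub_const μ).fun_pow 2).fun_neg.div_const (2 * (v : ℝ))).congr_deriv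
      (by push_cast; ring)
  rw [gaussianPDFReal_def]
  exact (hexponent.exp.const_mul _).congr_deriv (by ring)

lemma integrable_mul_gaussianPDFReal (μ : ℝ) (v : ℝ≥0) :
    Integrable fun x => x * gaussianPDFReal μ v x := by
  rcases eq_or_ne v 0 with rfl | hv
  · simp [gaussianPDFReal_zero_var]
  have h := memLp_id_gaussianReal (μ := μ) (v := v) 1 |>.integrable le_rfl
  rw [gaussianReal_of_var_ne_zero _ hv, integrable_withDensity_iff (measurable_gaussianPDF μ v)
    (ae_of_all _ fun _ => gaussianPDF_lt_top)] at h
  simpa using h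

local notation "φ" => gaussianPDFReal 0 1

lemma hasDerivAt_gaussianPDFReal_zero_one (x : ℝ) : HasDerivAt φ (-x * φ x) x := by
  simpa using hasDerivAt_gaussianPDFReal 0 1 x

lemma hasDerivAt_neg_gaussianPDFReal_zero_one (x : ℝ) :
    HasDerivAt (fun x => -φ x) (x * φ x) x := by
  simpa using (hasDerivAt_gaussianPDFReal_zero_one x).fun_neg

lemma integrable_neg_mul_gaussianPDFReal_zero_one : Integrable fun x => -x * φ x := by
  simpa only [neg_mul] using (integrable_mul_gaussianPDFReal 0 1).fun_neg

lemma tendsto_gaussianPDFReal_zero_one_atTop : Tendsto φ atTop (𝓝 0) :=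
  tendsto_zero_of_hasDerivAt_of_integrableOn_Ioi (a := 0)
    (fun x _ => hasDerivAt_gaussianPDFReal_zero_one x)
    integrable_neg_mul_gaussianPDFReal_zero_one.integrableOn
    (integrable_gaussianPDFReal 0 1).integrableOn

lemma tendsto_gaussianPDFReal_zero_one_atBot : Tendsto φ atBot (𝓝 0) :=
  tendsto_zero_of_hasDerivAt_of_integrableOn_Iic (a := 0)
    (fun x _ => hasDerivAt_gaussianPDFReal_zero_one x)
    integrable_neg_mul_gaussianPDFReal_zero_one.integrableOn
    (integrable_gaussianPDFReal 0 1).integrableOn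

lemma integral_Ioi_mul_gaussianPDFReal_zero_one (a : ℝ) : ∫ x in Ioi a, x * φ x = φ a := by
  rw [integral_Ioi_of_hasDerivAt_of_tendsto' (fun x _ => hasDerivAt_neg_gaussianPDFReal_zero_one x)
    (integrable_mul_gaussianPDFReal 0 1).integrableOn tendsto_gaussianPDFReal_zero_one_atTop.neg]
  simp

lemma integral_Iic_mul_gaussianPDFReal_zero_one (a : ℝ) : ∫ x in Iic a, x * φ x = -φ a := by
  rw [integral_Iic_of_hasDerivAt_of_tendsto' (fun x _ => hasDerivAt_neg_gaussianPDFReal_zero_one x)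
    (integrable_mul_gaussianPDFReal 0 1).integrableOn tendsto_gaussianPDFReal_zero_one_atBot.neg]
  simp

lemma mul_integral_Ioi_gaussianPDFReal_zero_one_le (a : ℝ) :
    a * ∫ x in Ioi a, φ x ≤ φ a := by
  rw [← integral_const_mul, ← integral_Ioi_mul_gaussianPDFReal_zero_one]
  refine setIntegral_mono_on ((integrable_gaussianPDFReal 0 1).const_mul a).integrableOn
    (integrable_mul_gaussianPDFReal 0 1).integrableOn measurableSet_Ioi fun x hx => ?_
  exact mul_le_mul_of_nonneg_right (le_of_lt hx) (gaussianPDFReal_nonneg 0 1 x)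

lemma neg_mul_integral_Iic_gaussianPDFReal_zero_one_le (a : ℝ) :
    -a * ∫ x in Iic a, φ x ≤ φ a := by
  rw [← integral_const_mul, ← neg_neg (φ a), ← integral_Iic_mul_gaussianPDFReal_zero_one,
    ← integral_neg]
  refine setIntegral_mono_on ((integrable_gaussianPDFReal 0 1).const_mul (-a)).integrableOn
    (integrable_mul_gaussianPDFReal 0 1).neg.integrableOn measurableSet_Iic fun x hx => ?_
  nlinarith [gaussianPDFReal_nonneg 0 1 x, mem_Iic.mp hx]

noncomputable def steinSolution (g : ℝ → ℝ) (x : ℝ) : ℝ := (∫ y in Iic x, φ y * g y) / φ x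

lemma integrable_gaussianPDFReal_mul (g : ℝ →ᵇ ℝ) : Integrable fun y => φ y * g y :=
  (integrable_gaussianPDFReal 0 1).mul_bdd g.continuous.aestronglyMeasurable
    (ae_of_all _ g.norm_coe_le_norm)

lemma hasDerivAt_steinSolution (g : ℝ →ᵇ ℝ) (x : ℝ) :
    HasDerivAt (steinSolution g) (x * steinSolution g x + g x) x := by
  have hφ := (gaussianPDFReal_pos 0 1 x one_ne_zero).ne'
  refine ((hasDerivAt_integral_Iic (integrable_gaussianPDFReal_mul g)
    ((hasDerivAt_gaussianPDFReal_zero_one x).continuousAt.mul g.continuous.continuousAt)).div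
    (hasDerivAt_gaussianPDFReal_zero_one x) hφ).congr_deriv ?_
  rw [steinSolution]
  field_simp
  ring

lemma abs_setIntegral_gaussianPDFReal_mul_le (g : ℝ →ᵇ ℝ) (s : Set ℝ) :
    |∫ y in s, φ y * g y| ≤ ‖g‖ * ∫ y in s, φ y := by
  rw [← integral_const_mul, ← Real.norm_eq_abs]
  refine norm_integral_le_of_norm_le ((integrable_gaussianPDFReal 0 1).const_mul _).integrableOn
    (ae_of_all _ fun y => ?_)
  rw [norm_mul, Real.norm_of_nonneg (gaussianPDFReal_nonneg 0 1 y), mul_comm]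
  exact mul_le_mul_of_nonneg_right (g.norm_coe_le_norm y) (gaussianPDFReal_nonneg 0 1 y)

lemma abs_mul_integral_Iic_gaussianPDFReal_mul_le (g : ℝ →ᵇ ℝ)
    (hg : ∫ y, g y ∂gaussianReal 0 1 = 0) (x : ℝ) :
    |x * ∫ y in Iic x, φ y * g y| ≤ ‖g‖ * φ x := by
  rcases le_total x 0 with hx | hx
  · calc |x * ∫ y in Iic x, φ y * g y| = -x * |∫ y in Iic x, φ y * g y| := by
          rw [abs_mul, abs_of_nonpos hx]
      _ ≤ -x * (‖g‖ * ∫ y in Iic x, φ y) :=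
          mul_le_mul_of_nonneg_left (abs_setIntegral_gaussianPDFReal_mul_le g _) (neg_nonneg.mpr hx)
      _ = ‖g‖ * (-x * ∫ y in Iic x, φ y) := by ring
      _ ≤ ‖g‖ * φ x := by
          gcongr; exact neg_mul_integral_Iic_gaussianPDFReal_zero_one_le x
  · have htotal : ∫ y, φ y * g y = 0 := by
      simpa only [integral_gaussianReal_eq_integral_smul one_ne_zero, smul_eq_mul] using hg
    have hIoi : ∫ y in Iic x, φ y * g y = -∫ y in Ioi x, φ y * g y := by
      have hsplit := intervalIntegral.integral_Iic_add_Ioi (b := x)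
        (integrable_gaussianPDFReal_mul g).integrableOn
        (integrable_gaussianPDFReal_mul g).integrableOn
      linarith
    calc |x * ∫ y in Iic x, φ y * g y| = x * |∫ y in Ioi x, φ y * g y| := by
          rw [hIoi, abs_mul, abs_neg, abs_of_nonneg hx]
      _ ≤ x * (‖g‖ * ∫ y in Ioi x, φ y) := by
          gcongr; exact abs_setIntegral_gaussianPDFReal_mul_le g _
      _ = ‖g‖ * (x * ∫ y in Ioi x, φ y) := by ring
      _ ≤ ‖g‖ * φ x := by
          gcongr; exact mul_integral_Ioi_gaussianPDFReal_zero_one_le x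

lemma abs_mul_steinSolution_le (g : ℝ →ᵇ ℝ) (hg : ∫ y, g y ∂gaussianReal 0 1 = 0) (x : ℝ) :
    |x * steinSolution g x| ≤ ‖g‖ := by
  have hφ := gaussianPDFReal_pos 0 1 x one_ne_zero
  rw [steinSolution, mul_div_assoc', abs_div, abs_of_pos hφ, div_le_iff₀ hφ]
  exact abs_mul_integral_Iic_gaussianPDFReal_mul_le g hg x

lemma integral_map_eq_zero_of_stein {Ω : Type*} [MeasurableSpace Ω] (P : Measure Ω)
    [IsFiniteMeasure P] (X : Ω → ℝ) (hX : Measurable X)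
    (hstein : ∀ f f' : ℝ → ℝ, (∀ x, HasDerivAt f (f' x) x) →
      Integrable f' (gaussianReal 0 1) →
      Integrable (fun ω => f' (X ω) - X ω * f (X ω)) P →
      ∫ ω, (f' (X ω) - X ω * f (X ω)) ∂P = 0)
    (g : ℝ →ᵇ ℝ) (hg : ∫ y, g y ∂gaussianReal 0 1 = 0) :
    ∫ x, g x ∂(P.map X) = 0 := by
  rw [integral_map hX.aemeasurable g.continuous.aestronglyMeasurable]
  set f := steinSolution g
  have hf : ∀ x, HasDerivAt f (x * f x + g x) x := hasDerivAt_steinSolution g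
  have hf'_cont : Continuous fun x => x * f x + g x :=
    (continuous_id.mul (continuous_iff_continuousAt.mpr fun x => (hf x).continuousAt)).add
      g.continuous
  have hf'_int : Integrable (fun x => x * f x + g x) (gaussianReal 0 1) :=
    .of_bound hf'_cont.aestronglyMeasurable (‖g‖ + ‖g‖) (ae_of_all _ fun x =>
      (norm_add_le _ _).trans (add_le_add (abs_mul_steinSolution_le g hg x) (g.norm_coe_le_norm x)))
  have hgX : Integrable (fun ω => g (X ω)) P :=
    .of_bound (g.continuous.comp_aestronglyMeasurable hX.aestronglyMeasurable) ‖g‖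
      (ae_of_all _ fun ω => g.norm_coe_le_norm (X ω))
  have hintegrand : (fun ω => X ω * f (X ω) + g (X ω) - X ω * f (X ω)) = fun ω => g (X ω) := by
    funext ω; ring
  simpa only [hintegrand] using hstein f _ hf hf'_int (by rwa [hintegrand])

/-- Characterizing direction of Stein's lemma: if `E[f'(X) − X f(X)] = 0` for
every (absolutely continuous) differentiable `f : ℝ → ℝ` whose derivative is
integrable against the standard Gaussian law, then `X ~ N(0,1)`. -/
theorem stein_characterization_of_gaussian
    {Ω : Type*} [MeasurableSpace Ω] (P : Measure Ω) [IsProbabilityMeasure P]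
    (X : Ω → ℝ) (hX : Measurable X)
    (hstein : ∀ f f' : ℝ → ℝ, (∀ x, HasDerivAt f (f' x) x) →
      Integrable f' (gaussianReal 0 1) →
      Integrable (fun ω => f' (X ω) - X ω * f (X ω)) P →
      ∫ ω, (f' (X ω) - X ω * f (X ω)) ∂P = 0) :
    Measure.map X P = gaussianReal 0 1 := by
  have : IsProbabilityMeasure (P.map X) := Measure.isProbabilityMeasure_map hX.aemeasurable
  refine ext_of_forall_integral_eq_of_IsFiniteMeasure fun h => ?_
  set c := ∫ x, h x ∂gaussianReal 0 1
  have hcentered : ∫ x, (h - const ℝ c) x ∂gaussianReal 0 1 = 0 := by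
    simp [integral_sub (h.integrable _) (integrable_const c), c]
  have hX_centered := integral_map_eq_zero_of_stein P X hX hstein _ hcentered
  simpa [integral_sub (h.integrable _) (integrable_const c), sub_eq_zero] using hX_centered
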